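/- (Riesz product identity) Let Φ_m(x_1, x_2) := ∏_{k=0}^m (1 + cos(4^k x_1) cos(4^{m-k} x_2)). Then Φ_m ≥ 0 everywhere, its mean value over the 2-torus equals 1 (hence ‖Φ_m‖_1 = 1), and Φ_m(x) = 1 + ∑_{k=0}^{m} cos(4^k x_1) cos(4^{m-k} x_2) + t_m(x), where t_m has all its nonzero Fourier coefficients at frequencies k = (k_1, k_2) with max{|k_1|, 1} · max{|k_2|, 1} > 4^m. -/

import Mathlib

/-!
Expanding the product gives
`Φ_m(x, y) = ∑_{T ⊆ {0,…,m}} ∏_{k ∈ T} cos (4^k x) ∏_{k ∈ T} cos (4^{m-k} y)`, and the `T`-term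
has its spectrum among the pairs `(∑_{k ∈ T} ±4^k, ∑_{k ∈ T} ±4^{m-k})`. A signed sum of distinct
powers of `4` exceeds `2/3` of its largest term in modulus. Hence for `T ≠ ∅` the term has mean
zero, which gives the mean value `1`, and for `#T ≥ 2` the two frequencies have product
`> (4/9) · 4^{max T} · 4^{m - min T} ≥ (4/9) · 4^{m+1} > 4^m`, so these terms have no spectrum
in the hyperbolic cross `Γ(4^m)`; the terms with `#T ≤ 1` are `1 + ∑_k cos (4^k x) cos (4^{m-k} y)`.
-/

open intervalIntegral

/-- The Riesz product `Φ_m(x) = ∏_{k=0}^m (1 + cos(4^k x_1) cos(4^{m-k} x_2))`. -/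
noncomputable def rieszProd (m : ℕ) (x : ℝ × ℝ) : ℝ :=
  ∏ k ∈ Finset.range (m + 1), (1 + Real.cos (4 ^ k * x.1) * Real.cos (4 ^ (m - k) * x.2))

open Finset

theorem Finset.prod_one_add_sub_one_sub_sum {ι R : Type*} [CommRing R] (s : Finset ι)
    (f : ι → R) :
    ∏ i ∈ s, (1 + f i) - 1 - ∑ i ∈ s, f i = ∑ t ∈ s.powerset with 1 < #t, ∏ i ∈ t, f i := by
  classical
  have hsmall :
      s.powerset.filter (fun t => ¬ 1 < #t) = insert ∅ (s.map ⟨_, singleton_injective⟩) := by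
    rw [← powersetCard_one]
    ext t
    simp only [mem_filter, mem_powerset, mem_insert, mem_powersetCard, not_lt,
      Nat.le_one_iff_eq_zero_or_eq_one, card_eq_zero]
    constructor
    · rintro ⟨hts, rfl | h⟩ <;> simp [*]
    · rintro (rfl | h) <;> simp [*]
  rw [prod_one_add, ← sum_filter_add_sum_filter_not _ (fun t => 1 < #t), hsmall,
    sum_insert (by simp), sum_map]
  simp only [prod_empty, Function.Embedding.coeFn_mk, prod_singleton]
  ring

theorem integral_exp_int_mul_I (n : ℤ) :
    ∫ x in -Real.pi..Real.pi, Complex.exp (n * x * Complex.I) =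
      if n = 0 then 2 * (Real.pi : ℂ) else 0 := by
  split_ifs with hn
  · simp only [hn, Int.cast_zero, zero_mul, Complex.exp_zero, integral_const, sub_neg_eq_add,
      Complex.real_smul, Complex.ofReal_add, mul_one]
    ring
  · have hc : (n : ℂ) * Complex.I ≠ 0 := mul_ne_zero (by exact_mod_cast hn) Complex.I_ne_zero
    simp_rw [mul_right_comm _ _ Complex.I]
    rw [integral_exp_mul_complex hc, div_eq_zero_iff, sub_eq_zero]
    left
    have hper : (n : ℂ) * Complex.I * Real.pi =
        n * Complex.I * (-Real.pi : ℝ) + n * (2 * Real.pi * Complex.I) := by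
      push_cast; ring
    rw [hper, Complex.exp_add, Complex.exp_int_mul_two_pi_mul_I, mul_one]

noncomputable def cosProd {ι : Type*} (n : ι → ℤ) (T : Finset ι) (x : ℝ) : ℝ :=
  ∏ k ∈ T, Real.cos (n k * x)

@[fun_prop]
theorem continuous_cosProd {ι : Type*} (n : ι → ℤ) (T : Finset ι) :
    Continuous (cosProd n T) := by
  unfold cosProd; fun_prop

def IsSignedSum {ι : Type*} (n : ι → ℤ) (T : Finset ι) (κ : ℤ) : Prop :=
  ∃ ε : ι → ℤˣ, κ = ∑ k ∈ T, ε k * n k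

theorem IsSignedSum.insert {ι : Type*} [DecidableEq ι] {n : ι → ℤ} {a : ι} {T : Finset ι}
    (ha : a ∉ T) {κ : ℤ} (h : IsSignedSum n T κ) (u : ℤˣ) :
    IsSignedSum n (insert a T) (κ + u * n a) := by
  obtain ⟨ε, rfl⟩ := h
  refine ⟨Function.update ε a u, ?_⟩
  rw [sum_insert ha, Function.update_self, add_comm]
  congr 1
  exact sum_congr rfl fun k hk => by rw [Function.update_of_ne (ne_of_mem_of_not_mem hk ha)]

theorem integral_cosProd_mul_exp_eq_zero {ι : Type*} {n : ι → ℤ} {T : Finset ι} {κ : ℤ}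
    (h : ¬ IsSignedSum n T κ) :
    ∫ x in -Real.pi..Real.pi, (cosProd n T x : ℂ) * Complex.exp (-(κ * x) * Complex.I) = 0 := by
  classical
  induction T using Finset.induction generalizing κ with
  | empty =>
    have hκ : -κ ≠ 0 := neg_ne_zero.mpr fun h0 => h ⟨1, by simp [h0]⟩
    have := integral_exp_int_mul_I (-κ)
    rw [if_neg hκ] at this
    simpa [cosProd, neg_mul] using this
  | @insert a T ha ih =>
    have hsplit : ∀ x : ℝ, (cosProd n (insert a T) x : ℂ) * Complex.exp (-(κ * x) * Complex.I) =
        (cosProd n T x : ℂ) * Complex.exp (-(((κ - n a : ℤ) : ℂ) * x) * Complex.I) / 2 +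
        (cosProd n T x : ℂ) * Complex.exp (-(((κ + n a : ℤ) : ℂ) * x) * Complex.I) / 2 := by
      intro x
      simp only [cosProd, prod_insert ha, Complex.ofReal_mul, Complex.ofReal_cos, Complex.cos]
      push_cast
      rw [show -((κ - n a : ℂ) * x) * Complex.I = n a * x * Complex.I + -(κ * x) * Complex.I by
          ring,
        show -((κ + n a : ℂ) * x) * Complex.I = -(n a * x) * Complex.I + -(κ * x) * Complex.I by
          ring,
        Complex.exp_add, Complex.exp_add]
      ring
    have hint : ∀ κ' : ℤ, IntervalIntegrable
        (fun x : ℝ => (cosProd n T x : ℂ) * Complex.exp (-(κ' * x) * Complex.I) / 2)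
        MeasureTheory.volume (-Real.pi) Real.pi := fun κ' =>
      (by fun_prop : Continuous _).intervalIntegrable _ _
    rw [integral_congr fun x _ => hsplit x, integral_add (hint _) (hint _), integral_div,
      integral_div, ih fun hs => h (by simpa using hs.insert ha 1),
      ih fun hs => h (by simpa using hs.insert ha (-1))]
    simp

theorem integral_cosProd_eq_zero {ι : Type*} {n : ι → ℤ} {T : Finset ι}
    (h : ¬ IsSignedSum n T 0) :
    ∫ x in -Real.pi..Real.pi, cosProd n T x = 0 := by
  have := integral_cosProd_mul_exp_eq_zero h
  simp only [Int.cast_zero, zero_mul, neg_zero, Complex.exp_zero, mul_one, integral_ofReal] at this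
  exact_mod_cast this

theorem IsSignedSum.two_mul_four_pow_lt_three_mul_abs {ι : Type*} {T : Finset ι}
    {e : ι → ℕ} {κ : ℤ} (hκ : IsSignedSum (fun k => 4 ^ e k) T κ) (he : Set.InjOn e T) {j : ι}
    (hj : j ∈ T) (hmax : ∀ k ∈ T, e k ≤ e j) : 2 * 4 ^ e j < 3 * |κ| := by
  classical
  obtain ⟨ε, rfl⟩ := hκ
  beta_reduce
  have habs : ∀ k, |(ε k : ℤ) * 4 ^ e k| = 4 ^ e k := fun k => by
    rw [abs_mul, Int.isUnit_iff_abs_eq.mp (ε k).isUnit, one_mul, abs_of_nonneg (by positivity)]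
  have htail : |∑ k ∈ T.erase j, (ε k : ℤ) * 4 ^ e k| ≤ ∑ i ∈ range (e j), 4 ^ i :=
    calc |∑ k ∈ T.erase j, (ε k : ℤ) * 4 ^ e k|
        ≤ ∑ k ∈ T.erase j, |(ε k : ℤ) * 4 ^ e k| := abs_sum_le_sum_abs _ _
      _ = ∑ i ∈ (T.erase j).image e, 4 ^ i := by
        rw [sum_image (he.mono (coe_subset.mpr (erase_subset j T)))]
        exact sum_congr rfl fun k _ => habs k
      _ ≤ ∑ i ∈ range (e j), 4 ^ i := by
        refine sum_le_sum_of_subset_of_nonneg ?_ fun _ _ _ => by positivity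
        intro i hi
        obtain ⟨k, hk, rfl⟩ := mem_image.mp hi
        have hkj : e k ≠ e j := fun h => ne_of_mem_erase hk (he (mem_of_mem_erase hk) hj h)
        exact mem_range.mpr ((hmax k (mem_of_mem_erase hk)).lt_of_ne hkj)
  -- the leading term `±4^{e j}` dominates the rest, which is at most `(4^{e j} - 1) / 3`
  have hgeom : (∑ i ∈ range (e j), (4 : ℤ) ^ i) * 3 = 4 ^ e j - 1 := by
    simpa using geom_sum_mul (4 : ℤ) (e j)
  have := abs_sub_abs_le_abs_add ((ε j : ℤ) * 4 ^ e j) (∑ k ∈ T.erase j, (ε k : ℤ) * 4 ^ e k)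
  rw [add_sum_erase T (fun k => (ε k : ℤ) * 4 ^ e k) hj, habs] at this
  linarith

theorem not_isSignedSum_four_pow_zero {T : Finset ℕ} (hT : T.Nonempty) :
    ¬ IsSignedSum (fun k => (4 : ℤ) ^ k) T 0 := fun h => by
  have := h.two_mul_four_pow_lt_three_mul_abs (e := id) (Set.injOn_id _) (T.max'_mem hT)
    fun k hk => T.le_max' k hk
  simp only [abs_zero, mul_zero] at this
  exact this.not_ge (by positivity)

theorem not_isSignedSum_four_pow_and_four_pow_sub {m : ℕ} {T : Finset ℕ} (hT : T ⊆ range (m + 1))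
    (hcard : 1 < #T) {κ₁ κ₂ : ℤ} (hκ : |κ₁| * |κ₂| ≤ 4 ^ m)
    (h₁ : IsSignedSum (fun k => (4 : ℤ) ^ k) T κ₁)
    (h₂ : IsSignedSum (fun k => (4 : ℤ) ^ (m - k)) T κ₂) : False := by
  have hne : T.Nonempty := card_pos.mp (by omega)
  have hlt : T.min' hne < T.max' hne := min'_lt_max'_of_card T hcard
  have hle : T.min' hne ≤ m := Nat.lt_succ_iff.mp (mem_range.mp (hT (T.min'_mem hne)))
  have hb₁ : 2 * 4 ^ T.max' hne < 3 * |κ₁| :=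
    h₁.two_mul_four_pow_lt_three_mul_abs (e := id) (Set.injOn_id _) (T.max'_mem hne)
      fun k hk => T.le_max' k hk
  have hinj : Set.InjOn (m - ·) T := fun a ha b hb (hab : m - a = m - b) => by
    have := mem_range.mp (hT ha); have := mem_range.mp (hT hb); omega
  have hb₂ : 2 * 4 ^ (m - T.min' hne) < 3 * |κ₂| :=
    h₂.two_mul_four_pow_lt_three_mul_abs (e := (m - ·)) hinj (T.min'_mem hne)
      fun k hk => Nat.sub_le_sub_left (T.min'_le k hk) m
  have hpow : (4 : ℤ) ^ (m + 1) ≤ 4 ^ T.max' hne * 4 ^ (m - T.min' hne) := by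
    rw [← pow_add]; exact pow_le_pow_right₀ (by norm_num) (by omega)
  have := mul_lt_mul'' hb₁ hb₂ (by positivity) (by positivity)
  nlinarith [pow_pos (by norm_num : (0 : ℤ) < 4) m, pow_succ (4 : ℤ) m]

theorem rieszProd_nonneg (m : ℕ) (x : ℝ × ℝ) : 0 ≤ rieszProd m x :=
  prod_nonneg fun k _ => by
    have : |Real.cos (4 ^ k * x.1) * Real.cos (4 ^ (m - k) * x.2)| ≤ 1 := by
      rw [abs_mul]
      exact mul_le_one₀ (Real.abs_cos_le_one _) (abs_nonneg _) (Real.abs_cos_le_one _)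
    linarith [neg_abs_le (Real.cos (4 ^ k * x.1) * Real.cos (4 ^ (m - k) * x.2))]

theorem rieszProd_eq_sum_powerset (m : ℕ) (x y : ℝ) :
    rieszProd m (x, y) = ∑ T ∈ (range (m + 1)).powerset,
      cosProd (fun k => 4 ^ k) T x * cosProd (fun k => 4 ^ (m - k)) T y := by
  simp only [rieszProd, prod_one_add, cosProd, ← prod_mul_distrib]
  push_cast
  rfl

theorem rieszProd_sub_one_sub_sum (m : ℕ) (x y : ℝ) :
    rieszProd m (x, y) - 1 -
        ∑ k ∈ range (m + 1), Real.cos (4 ^ k * x) * Real.cos (4 ^ (m - k) * y) =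
      ∑ T ∈ (range (m + 1)).powerset with 1 < #T,
        cosProd (fun k => 4 ^ k) T x * cosProd (fun k => 4 ^ (m - k)) T y := by
  simp only [rieszProd, prod_one_add_sub_one_sub_sum, cosProd, ← prod_mul_distrib]
  push_cast
  rfl

theorem integral_integral_sum_mul {𝕜 ι : Type*} [RCLike 𝕜] (S : Finset ι) {f g : ι → ℝ → 𝕜}
    (hf : ∀ i, Continuous (f i)) (hg : ∀ i, Continuous (g i)) (a b c d : ℝ) :
    ∫ x in a..b, ∫ y in c..d, ∑ i ∈ S, f i x * g i y =
      ∑ i ∈ S, (∫ x in a..b, f i x) * ∫ y in c..d, g i y := by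
  have hinner : ∀ x, ∫ y in c..d, ∑ i ∈ S, f i x * g i y = ∑ i ∈ S, f i x * ∫ y in c..d, g i y :=
    fun x => by
      rw [integral_finsetSum fun i _ => ((hg i).const_mul _).intervalIntegrable _ _]
      simp only [integral_const_mul]
  simp only [hinner]
  rw [integral_finsetSum fun i _ => ?_]
  · simp only [integral_mul_const]
  · have := hf i
    exact Continuous.intervalIntegrable (by fun_prop) _ _

theorem integral_integral_rieszProd (m : ℕ) :
    ∫ x in -Real.pi..Real.pi, ∫ y in -Real.pi..Real.pi, rieszProd m (x, y) =
      (2 * Real.pi) ^ 2 := by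
  simp only [rieszProd_eq_sum_powerset]
  rw [integral_integral_sum_mul _ (fun _ => continuous_cosProd _ _)
    (fun _ => continuous_cosProd _ _), sum_eq_single_of_mem ∅ (empty_mem_powerset _)]
  · simp only [cosProd, prod_empty, integral_const, sub_neg_eq_add, smul_eq_mul, mul_one]
    ring
  · intro T _ hT
    rw [integral_cosProd_eq_zero (not_isSignedSum_four_pow_zero (nonempty_of_ne_empty hT)),
      zero_mul]

theorem integral_integral_rieszProd_sub_mul_exp_eq_zero (m : ℕ) {κ₁ κ₂ : ℤ}
    (hκ : max |κ₁| 1 * max |κ₂| 1 ≤ 4 ^ m) :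
    ∫ x in -Real.pi..Real.pi, ∫ y in -Real.pi..Real.pi,
      ((rieszProd m (x, y) - 1 - ∑ k ∈ range (m + 1),
          Real.cos (4 ^ k * x) * Real.cos (4 ^ (m - k) * y) : ℝ) : ℂ) *
        Complex.exp (-((κ₁ : ℂ) * x + (κ₂ : ℂ) * y) * Complex.I) = 0 := by
  have hsplit : ∀ x y : ℝ, ((rieszProd m (x, y) - 1 - ∑ k ∈ range (m + 1),
      Real.cos (4 ^ k * x) * Real.cos (4 ^ (m - k) * y) : ℝ) : ℂ) *
        Complex.exp (-((κ₁ : ℂ) * x + (κ₂ : ℂ) * y) * Complex.I) =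
      ∑ T ∈ (range (m + 1)).powerset with 1 < #T,
        (cosProd (fun k => 4 ^ k) T x * Complex.exp (-(κ₁ * x) * Complex.I)) *
          (cosProd (fun k => 4 ^ (m - k)) T y * Complex.exp (-(κ₂ * y) * Complex.I)) := by
    intro x y
    rw [rieszProd_sub_one_sub_sum, Complex.ofReal_sum, sum_mul]
    refine sum_congr rfl fun T _ => ?_
    rw [Complex.ofReal_mul, neg_add, add_mul, Complex.exp_add]
    ring
  have hκ' : |κ₁| * |κ₂| ≤ 4 ^ m :=
    (mul_le_mul (le_max_left _ _) (le_max_left _ _) (abs_nonneg _)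
      (zero_le_one.trans (le_max_right _ _))).trans hκ
  simp only [hsplit]
  rw [integral_integral_sum_mul _ (fun _ => by fun_prop) (fun _ => by fun_prop)]
  refine sum_eq_zero fun T hT => ?_
  rw [mem_filter, mem_powerset] at hT
  by_cases h₁ : IsSignedSum (fun k => (4 : ℤ) ^ k) T κ₁
  · by_cases h₂ : IsSignedSum (fun k => (4 : ℤ) ^ (m - k)) T κ₂
    · exact (not_isSignedSum_four_pow_and_four_pow_sub hT.1 hT.2 hκ' h₁ h₂).elim
    · rw [integral_cosProd_mul_exp_eq_zero h₂, mul_zero]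
  · rw [integral_cosProd_mul_exp_eq_zero h₁, zero_mul]

/-- Riesz product identity: `Φ_m ≥ 0`, its mean value over `𝕋^2` equals `1`
(hence `‖Φ_m‖_1 = 1`), and
`Φ_m(x) = 1 + ∑_{k=0}^m cos(4^k x_1)cos(4^{m-k} x_2) + t_m(x)` where all Fourier
coefficients of `t_m` at frequencies in the hyperbolic cross `Γ(4^m)` vanish. -/
theorem stmt18 (m : ℕ) :
    (∀ x : ℝ × ℝ, 0 ≤ rieszProd m x) ∧
    ((2 * Real.pi) ^ (2 : ℕ))⁻¹ *
      (∫ x in (-Real.pi)..Real.pi, ∫ y in (-Real.pi)..Real.pi, rieszProd m (x, y)) = 1 ∧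
    (∀ κ : ℤ × ℤ, max |κ.1| 1 * max |κ.2| 1 ≤ (4 : ℤ) ^ m →
      (∫ x in (-Real.pi)..Real.pi, ∫ y in (-Real.pi)..Real.pi,
        ((rieszProd m (x, y) - 1 - ∑ k ∈ Finset.range (m + 1),
            Real.cos (4 ^ k * x) * Real.cos (4 ^ (m - k) * y) : ℝ) : ℂ) *
          Complex.exp (-((κ.1 : ℂ) * (x : ℂ) + (κ.2 : ℂ) * (y : ℂ)) * Complex.I)) = 0) :=
  ⟨rieszProd_nonneg m, by rw [integral_integral_rieszProd]; field_simp [Real.pi_ne_zero],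
    fun _ hκ => integral_integral_rieszProd_sub_mul_exp_eq_zero m hκ⟩
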